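/- Let w ∈ A₂ᵈ. Then for every dyadic interval I, the coefficient c_I = √|I|(w_{I₋} − w_{I₊})/(2w_I) satisfies c_I²/|I| ≤ 1 − 1/[w]_{A₂ᵈ} < 1; in particular |w_{I₋} − w_{I₊}| < 2 w_I. -/

import Mathlib

/-!
Since `w_I = (w_{I₋} + w_{I₊})/2`, one has `c_I²/|I| = 1 - w_{I₋} w_{I₊} / w_I²`.
By Cauchy–Schwarz, `(w⁻¹)_J ≥ 1/w_J` on every dyadic `J`; averaging this over the two halves
of `I` gives `w_I (w⁻¹)_I ≥ w_I² / (w_{I₋} w_{I₊})`, so the `A₂` condition yields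
`w_{I₋} w_{I₊} / w_I² ≥ 1/[w]_{A₂ᵈ}`, and also `[w]_{A₂ᵈ} ≥ 1`. The last claim is
`|a - b| < a + b` for `a, b > 0`.
-/

open MeasureTheory Set Filter
noncomputable section

/-- The dyadic interval of generation `n` and position `k`: `[k·2⁻ⁿ, (k+1)·2⁻ⁿ)`. -/
def dI (n k : ℤ) : Set ℝ := Set.Ico ((k : ℝ) * 2 ^ (-n)) (((k : ℝ) + 1) * 2 ^ (-n))

/-- The length `2⁻ⁿ` of a dyadic interval of generation `n`. -/
def len (n : ℤ) : ℝ := 2 ^ (-n)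

/-- The average of `w` over the dyadic interval of generation `n`, position `k`. -/
def avg (w : ℝ → ℝ) (n k : ℤ) : ℝ := (2 : ℝ) ^ (n : ℤ) * ∫ x in dI n k, w x

/-- Average over the left half. -/
def avgL (w : ℝ → ℝ) (n k : ℤ) : ℝ := avg w (n + 1) (2 * k)

/-- Average over the right half. -/
def avgR (w : ℝ → ℝ) (n k : ℤ) : ℝ := avg w (n + 1) (2 * k + 1)

/-- The coefficient `c_I = √|I| (w_{I₋} − w_{I₊})/(2 w_I)`. -/
def cI (w : ℝ → ℝ) (n k : ℤ) : ℝ :=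
  Real.sqrt (len n) * (avgL w n k - avgR w n k) / (2 * avg w n k)

/-- The pointwise inverse `w⁻¹` of a weight. -/
def inv' (w : ℝ → ℝ) : ℝ → ℝ := fun x => (w x)⁻¹

/-- The dyadic A₂ characteristic `[w]_{A₂ᵈ} = sup_Q (⨍_Q w)(⨍_Q w⁻¹)`. -/
def A2d (w : ℝ → ℝ) : ℝ := ⨆ p : ℤ × ℤ, avg w p.1 p.2 * avg (inv' w) p.1 p.2

/-- The Haar function of the dyadic interval of generation `n`, position `k`. -/
def haar (n k : ℤ) : ℝ → ℝ := fun x =>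
  (Real.sqrt (len n))⁻¹ *
    ((dI (n + 1) (2 * k + 1)).indicator (fun _ => (1 : ℝ)) x -
      (dI (n + 1) (2 * k)).indicator (fun _ => (1 : ℝ)) x)

/-- The measure `w dx`. -/
def wMeas (w : ℝ → ℝ) : Measure ℝ := volume.withDensity fun x => ENNReal.ofReal (w x)

lemma two_le_add_inv {u : ℝ} (hu : 0 < u) : 2 ≤ u + u⁻¹ :=
  calc 2 ≤ 2 + (u - 1) ^ 2 / u := le_add_of_nonneg_right (by positivity)
    _ = u + u⁻¹ := by field_simp; ring

/-- Cauchy–Schwarz for `√w` and `1/√w`, proved by integrating `2 ≤ t w + (t w)⁻¹` with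
`t = μ(α) / ∫ w`. -/
theorem sq_measureReal_univ_le_integral_mul_integral_inv {α : Type*} [MeasurableSpace α]
    {μ : Measure α} [IsFiniteMeasure μ] {w : α → ℝ} (hw : ∀ᵐ x ∂μ, 0 < w x)
    (hint : Integrable w μ) (hint' : Integrable (fun x => (w x)⁻¹) μ) :
    μ.real univ ^ 2 ≤ (∫ x, w x ∂μ) * ∫ x, (w x)⁻¹ ∂μ := by
  rcases eq_or_ne μ 0 with hμ | hμ
  · simp [hμ]
  have : NeZero μ := ⟨hμ⟩
  set m := μ.real univ
  set A := ∫ x, w x ∂μ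
  set B := ∫ x, (w x)⁻¹ ∂μ
  have hm : 0 < m := measureReal_univ_pos
  have hA : 0 < A := by
    rw [integral_pos_iff_support_of_nonneg_ae (hw.mono fun x hx => hx.le) hint]
    exact (Measure.measure_univ_pos.2 hμ).trans_le
      (measure_mono_ae (hw.mono fun x hx _ => hx.ne'))
  set t := m / A
  have ht : 0 < t := div_pos hm hA
  have hamgm : 2 * m ≤ t * A + t⁻¹ * B :=
    calc 2 * m = ∫ _, (2 : ℝ) ∂μ := by simp [m, mul_comm]
      _ ≤ ∫ x, (t * w x + t⁻¹ * (w x)⁻¹) ∂μ :=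
        integral_mono_ae (integrable_const 2) ((hint.const_mul t).add (hint'.const_mul t⁻¹))
          (hw.mono fun x hx => by
            simpa [mul_inv, mul_comm] using two_le_add_inv (mul_pos ht hx))
      _ = t * A + t⁻¹ * B := by
        rw [integral_add (hint.const_mul t) (hint'.const_mul t⁻¹), integral_const_mul,
          integral_const_mul]
  have htA : t * A = m := div_mul_cancel₀ m hA.ne'
  have htB : t⁻¹ * B = A * B / m := by rw [inv_div]; ring
  rw [htA, htB, ← sub_le_iff_le_add', le_div_iff₀ hm] at hamgm
  nlinarith

section Dyadic

variable {w : ℝ → ℝ}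

lemma len_pos (n : ℤ) : 0 < len n := by unfold len; positivity

lemma two_zpow_neg_succ (n : ℤ) : (2 : ℝ) ^ (-(n + 1)) = 2 ^ (-n) / 2 := by
  rw [neg_add, zpow_add₀ two_ne_zero, zpow_neg_one, div_eq_mul_inv]

lemma volume_dI (n k : ℤ) : volume (dI n k) = ENNReal.ofReal (len n) := by
  rw [dI, Real.volume_Ico, len]
  ring_nf

lemma measureReal_dI (n k : ℤ) : volume.real (dI n k) = len n := by
  rw [measureReal_def, volume_dI, ENNReal.toReal_ofReal (len_pos n).le]

lemma integrableOn_dI (hw : LocallyIntegrable w volume) (n k : ℤ) :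
    IntegrableOn w (dI n k) volume :=
  (hw.integrableOn_isCompact isCompact_Icc).mono_set Ico_subset_Icc_self

lemma dI_left_child (n k : ℤ) :
    dI (n + 1) (2 * k) = Ico ((k : ℝ) * 2 ^ (-n)) ((k + 1 / 2 : ℝ) * 2 ^ (-n)) := by
  simp only [dI, two_zpow_neg_succ]; push_cast; congr 1 <;> ring

lemma dI_right_child (n k : ℤ) :
    dI (n + 1) (2 * k + 1) = Ico ((k + 1 / 2 : ℝ) * 2 ^ (-n)) (((k : ℝ) + 1) * 2 ^ (-n)) := by
  simp only [dI, two_zpow_neg_succ]; push_cast; congr 1 <;> ring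

lemma disjoint_dI_children (n k : ℤ) :
    Disjoint (dI (n + 1) (2 * k)) (dI (n + 1) (2 * k + 1)) := by
  rw [dI_left_child, dI_right_child]; exact Ico_disjoint_Ico_same

lemma dI_eq_union_children (n k : ℤ) :
    dI n k = dI (n + 1) (2 * k) ∪ dI (n + 1) (2 * k + 1) := by
  have h : (0 : ℝ) < 2 ^ (-n) := by positivity
  rw [dI_left_child, dI_right_child, Ico_union_Ico_eq_Ico (by nlinarith) (by nlinarith), dI]

lemma integral_dI_eq_add_children (hw : LocallyIntegrable w volume) (n k : ℤ) :
    ∫ x in dI n k, w x =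
      (∫ x in dI (n + 1) (2 * k), w x) + ∫ x in dI (n + 1) (2 * k + 1), w x := by
  rw [dI_eq_union_children n k]
  exact setIntegral_union (disjoint_dI_children n k) measurableSet_Ico
    (integrableOn_dI hw _ _) (integrableOn_dI hw _ _)

lemma avg_eq_integral_div_len (n k : ℤ) : avg w n k = (∫ x in dI n k, w x) / len n := by
  rw [avg, len, zpow_neg, div_inv_eq_mul, mul_comm]

lemma avg_pos (hpos : ∀ x, 0 < w x) (hw : LocallyIntegrable w volume) (n k : ℤ) :
    0 < avg w n k := by
  rw [avg_eq_integral_div_len]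
  refine div_pos ?_ (len_pos n)
  rw [setIntegral_pos_iff_support_of_nonneg_ae (.of_forall fun x => (hpos x).le)
    (integrableOn_dI hw n k), Function.support_eq_univ fun x => (hpos x).ne', univ_inter, volume_dI]
  exact ENNReal.ofReal_pos.2 (len_pos n)

lemma avg_eq_avgL_add_avgR_div_two (hw : LocallyIntegrable w volume) (n k : ℤ) :
    avg w n k = (avgL w n k + avgR w n k) / 2 := by
  rw [avgL, avgR, avg, avg, avg, integral_dI_eq_add_children hw n k, zpow_add₀ two_ne_zero]
  ring

lemma one_le_avg_mul_avg_inv (hpos : ∀ x, 0 < w x) (hw : LocallyIntegrable w volume)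
    (hw' : LocallyIntegrable (inv' w) volume) (n k : ℤ) :
    1 ≤ avg w n k * avg (inv' w) n k := by
  have : IsFiniteMeasure (volume.restrict (dI n k)) :=
    isFiniteMeasure_restrict.2 (by rw [volume_dI]; exact ENNReal.ofReal_ne_top)
  have hCS := sq_measureReal_univ_le_integral_mul_integral_inv (μ := volume.restrict (dI n k))
    (.of_forall hpos) (integrableOn_dI hw n k) (integrableOn_dI hw' n k)
  rw [measureReal_restrict_apply_univ, measureReal_dI] at hCS
  rw [avg_eq_integral_div_len, avg_eq_integral_div_len, div_mul_div_comm, ← sq,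
    one_le_div (by positivity [len_pos n])]
  exact hCS

lemma inv_avg_le_avg_inv (hpos : ∀ x, 0 < w x) (hw : LocallyIntegrable w volume)
    (hw' : LocallyIntegrable (inv' w) volume) (n k : ℤ) :
    (avg w n k)⁻¹ ≤ avg (inv' w) n k := by
  rw [inv_le_iff_one_le_mul₀' (avg_pos hpos hw n k)]
  exact one_le_avg_mul_avg_inv hpos hw hw' n k

lemma avg_mul_avg_inv_le_A2d
    (hbdd : BddAbove (range fun p : ℤ × ℤ => avg w p.1 p.2 * avg (inv' w) p.1 p.2))
    (n k : ℤ) :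
    avg w n k * avg (inv' w) n k ≤ A2d w :=
  le_ciSup hbdd (n, k)

lemma one_le_A2d (hpos : ∀ x, 0 < w x) (hw : LocallyIntegrable w volume)
    (hw' : LocallyIntegrable (inv' w) volume)
    (hbdd : BddAbove (range fun p : ℤ × ℤ => avg w p.1 p.2 * avg (inv' w) p.1 p.2)) :
    1 ≤ A2d w :=
  (one_le_avg_mul_avg_inv hpos hw hw' 0 0).trans (avg_mul_avg_inv_le_A2d hbdd 0 0)

lemma avg_sq_le_A2d_mul_avgL_mul_avgR (hpos : ∀ x, 0 < w x)
    (hw : LocallyIntegrable w volume) (hw' : LocallyIntegrable (inv' w) volume)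
    (hbdd : BddAbove (range fun p : ℤ × ℤ => avg w p.1 p.2 * avg (inv' w) p.1 p.2))
    (n k : ℤ) :
    avg w n k ^ 2 ≤ A2d w * (avgL w n k * avgR w n k) := by
  have ha : 0 < avgL w n k := avg_pos hpos hw _ _
  have hb : 0 < avgR w n k := avg_pos hpos hw _ _
  have hm := avg_pos hpos hw n k
  calc avg w n k ^ 2
      = avgL w n k * avgR w n k * (avg w n k * (((avgL w n k)⁻¹ + (avgR w n k)⁻¹) / 2)) := by
        rw [avg_eq_avgL_add_avgR_div_two hw n k]
        field_simp
        ring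
    _ ≤ avgL w n k * avgR w n k *
          (avg w n k * ((avgL (inv' w) n k + avgR (inv' w) n k) / 2)) := by
        gcongr
        exacts [inv_avg_le_avg_inv hpos hw hw' _ _, inv_avg_le_avg_inv hpos hw hw' _ _]
    _ = avgL w n k * avgR w n k * (avg w n k * avg (inv' w) n k) := by
        rw [← avg_eq_avgL_add_avgR_div_two hw' n k]
    _ ≤ A2d w * (avgL w n k * avgR w n k) := by
        rw [mul_comm (A2d w)]
        gcongr
        exact avg_mul_avg_inv_le_A2d hbdd n k

lemma cI_sq_div_len_eq (hpos : ∀ x, 0 < w x) (hw : LocallyIntegrable w volume)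
    (n k : ℤ) : cI w n k ^ 2 / len n = 1 - avgL w n k * avgR w n k / avg w n k ^ 2 := by
  have ha : 0 < avgL w n k := avg_pos hpos hw _ _
  have hb : 0 < avgR w n k := avg_pos hpos hw _ _
  have hlen := len_pos n
  rw [cI, div_pow, mul_pow, Real.sq_sqrt hlen.le, avg_eq_avgL_add_avgR_div_two hw]
  field_simp
  ring

end Dyadic

/-- `c_I²/|I| ≤ 1 − 1/[w]_{A₂ᵈ} < 1`, so `|w_{I₋} − w_{I₊}| < 2 w_I`. -/
theorem cI_sq_div_len_lt_one (w : ℝ → ℝ) (hpos : ∀ x, 0 < w x)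
    (hloc : LocallyIntegrable w volume) (hloc' : LocallyIntegrable (inv' w) volume)
    (hbdd : BddAbove (Set.range fun p : ℤ × ℤ => avg w p.1 p.2 * avg (inv' w) p.1 p.2))
    (n k : ℤ) :
    (cI w n k) ^ 2 / len n ≤ 1 - (A2d w)⁻¹ ∧ 1 - (A2d w)⁻¹ < 1 ∧
      |avgL w n k - avgR w n k| < 2 * avg w n k := by
  have ha : 0 < avgL w n k := avg_pos hpos hloc _ _
  have hb : 0 < avgR w n k := avg_pos hpos hloc _ _
  have hm := avg_pos hpos hloc n k
  have hK : 0 < A2d w := zero_lt_one.trans_le (one_le_A2d hpos hloc hloc' hbdd)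
  have hinvK : (A2d w)⁻¹ ≤ avgL w n k * avgR w n k / avg w n k ^ 2 := by
    rw [inv_le_comm₀ (by positivity) (by positivity), inv_div, div_le_iff₀ (by positivity)]
    exact avg_sq_le_A2d_mul_avgL_mul_avgR hpos hloc hloc' hbdd n k
  refine ⟨?_, ?_, ?_⟩
  · rw [cI_sq_div_len_eq hpos hloc]
    linarith
  · linarith [inv_pos.2 hK]
  · rw [avg_eq_avgL_add_avgR_div_two hloc, abs_sub_lt_iff]
    constructor <;> linarith
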